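/- arXiv:2001.11668 — 4 statements merged into one kernel-verified Lean document; each statement's English description precedes it below -/
import Mathlib

section
/- Let M be an n×n real symmetric matrix with eigendecomposition M = Σ_{i=1}^n λ_i v_i v_iᵀ, where λ_1 ≥ ... ≥ λ_n and v_1,...,v_n are orthonormal eigenvectors. Then there exists a unique scalar λ ∈ ℝ satisfying Σ_{i=1}^n max{0, λ_i − λ} = 1, and the Euclidean (Frobenius-norm) projection of M onto the spectrahedron S_n equals Π_{S_n}[M] = Σ_{i=1}^n max{0, λ_i − λ} v_i v_iᵀ. -/
/-!
The water level `t ↦ ∑ i, (λᵢ - t)⁺` is continuous, vanishes at `t = max λ`, is at least `1` at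
`t = max λ - 1`, and strictly decreases wherever it is positive; hence it takes the value `1`
exactly once.

For `μᵢ = (λᵢ - λ)⁺` the matrix `P = ∑ μᵢ vᵢvᵢᵀ` is positive semidefinite with trace `∑ μᵢ = 1`.
If `Z` lies in the spectrahedron, then `zᵢ = vᵢᵀ Z vᵢ ≥ 0` and `∑ zᵢ = tr Z = 1`, and since
`λᵢ - μᵢ = min λᵢ λ`,
`⟪M - P, Z - P⟫ = ∑ min λᵢ λ * (zᵢ - μᵢ) ≤ λ * ∑ (zᵢ - μᵢ) = 0`.
This obtuse-angle condition gives `‖M - P‖ ≤ ‖M - Z‖`.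
-/

open scoped BigOperators
open MeasureTheory
open scoped Matrix

namespace LRSGD

noncomputable def frobInner {n : ℕ} (A B : Matrix (Fin n) (Fin n) ℝ) : ℝ :=
  Matrix.trace (A * Bᵀ)

noncomputable def frobNorm {n : ℕ} (A : Matrix (Fin n) (Fin n) ℝ) : ℝ :=
  Real.sqrt (∑ i, ∑ j, (A i j) ^ 2)

noncomputable def specNorm {n : ℕ} (A : Matrix (Fin n) (Fin n) ℝ) : ℝ :=
  sSup {s : ℝ | ∃ u : Fin n → ℝ, (∑ k, u k ^ 2) = 1 ∧
    s = Real.sqrt (∑ i, (A.mulVec u i) ^ 2)}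

def spectrahedron (n : ℕ) : Set (Matrix (Fin n) (Fin n) ℝ) :=
  {X | X.PosSemidef ∧ X.trace = 1}

def IsProjOn {n : ℕ} (S : Set (Matrix (Fin n) (Fin n) ℝ))
    (M P : Matrix (Fin n) (Fin n) ℝ) : Prop :=
  P ∈ S ∧ ∀ Z ∈ S, frobNorm (M - P) ≤ frobNorm (M - Z)

def IsEigenDecomp {n : ℕ} (M : Matrix (Fin n) (Fin n) ℝ)
    (lam : Fin n → ℝ) (v : Fin n → Fin n → ℝ) : Prop :=
  Antitone lam ∧
  (∀ i j, (∑ k, v i k * v j k) = if i = j then (1 : ℝ) else 0) ∧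
  M = ∑ i, lam i • Matrix.vecMulVec (v i) (v i)

def IsGradient {n : ℕ} (f : Matrix (Fin n) (Fin n) ℝ → ℝ)
    (g : Matrix (Fin n) (Fin n) ℝ → Matrix (Fin n) (Fin n) ℝ) : Prop :=
  ∀ X H : Matrix (Fin n) (Fin n) ℝ,
    HasDerivAt (fun t : ℝ => f (X + t • H)) (frobInner (g X) H) 0

def IsMinimizerOn {n : ℕ} (f : Matrix (Fin n) (Fin n) ℝ → ℝ)
    (S : Set (Matrix (Fin n) (Fin n) ℝ)) (Xs : Matrix (Fin n) (Fin n) ℝ) : Prop :=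
  Xs ∈ S ∧ ∀ Y ∈ S, f Xs ≤ f Y

open Matrix

section WaterFilling

variable {ι : Type*} [Fintype ι]

noncomputable def waterFill (lam : ι → ℝ) (t : ℝ) : ℝ :=
  ∑ i, max 0 (lam i - t)

theorem continuous_waterFill (lam : ι → ℝ) : Continuous (waterFill lam) :=
  continuous_finsetSum _ fun _ _ => continuous_const.max (continuous_const.sub continuous_id)

theorem waterFill_eq_zero {lam : ι → ℝ} {t : ℝ} (h : ∀ i, lam i ≤ t) : waterFill lam t = 0 :=
  Finset.sum_eq_zero fun i _ => max_eq_left (sub_nonpos.mpr (h i))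

theorem le_waterFill_sub (lam : ι → ℝ) (i : ι) {c : ℝ} (hc : 0 ≤ c) :
    c ≤ waterFill lam (lam i - c) :=
  calc c = max 0 (lam i - (lam i - c)) := by rw [sub_sub_cancel, max_eq_right hc]
    _ ≤ waterFill lam (lam i - c) :=
      Finset.single_le_sum (f := fun j => max 0 (lam j - (lam i - c)))
        (fun _ _ => le_max_left _ _) (Finset.mem_univ i)

theorem waterFill_lt_of_lt {lam : ι → ℝ} {a b : ℝ} (hab : a < b) (ha : 0 < waterFill lam a) :
    waterFill lam b < waterFill lam a := by
  obtain ⟨i, -, hi⟩ := Finset.exists_lt_of_sum_lt (s := Finset.univ)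
    (f := fun _ => (0 : ℝ)) (by simpa [waterFill] using ha)
  refine Finset.sum_lt_sum (fun j _ => max_le_max le_rfl (by linarith)) ⟨i, Finset.mem_univ i, ?_⟩
  have hai : a < lam i := by
    by_contra! h
    exact hi.ne' (max_eq_left (sub_nonpos.mpr h))
  rw [max_eq_right (sub_nonneg.mpr hai.le)]
  exact max_lt (sub_pos.mpr hai) (by linarith)

theorem existsUnique_waterFill_eq [Nonempty ι] (lam : ι → ℝ) {c : ℝ} (hc : 0 < c) :
    ∃! t, waterFill lam t = c := by
  obtain ⟨i, hi⟩ := Finite.exists_max lam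
  obtain ⟨t, -, ht⟩ := intermediate_value_Icc' (sub_le_self (lam i) hc.le)
    (continuous_waterFill lam).continuousOn
    ⟨(waterFill_eq_zero hi).trans_le hc.le, le_waterFill_sub lam i hc.le⟩
  refine ⟨t, ht, fun s hs => ?_⟩
  by_contra hst
  rcases lt_or_gt_of_ne hst with h | h
  · exact (waterFill_lt_of_lt h (hs ▸ hc)).ne (hs.trans ht.symm).symm
  · exact (waterFill_lt_of_lt h (ht ▸ hc)).ne (hs.trans ht.symm)

theorem sub_max_sub_mul_le (a t : ℝ) {z : ℝ} (hz : 0 ≤ z) :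
    (a - max 0 (a - t)) * (z - max 0 (a - t)) ≤ t * (z - max 0 (a - t)) := by
  rcases le_total a t with h | h
  · rw [max_eq_left (sub_nonpos.mpr h), sub_zero, sub_zero]
    exact mul_le_mul_of_nonneg_right h hz
  · rw [max_eq_right (sub_nonneg.mpr h), sub_sub_cancel]

end WaterFilling

theorem frobInner_eq_sum {n : ℕ} (A B : Matrix (Fin n) (Fin n) ℝ) :
    frobInner A B = ∑ i, ∑ j, A i j * B i j := by
  simp [frobInner, trace, mul_apply]

theorem frobNorm_sub_le_of_frobInner_nonpos {n : ℕ} {A P Z : Matrix (Fin n) (Fin n) ℝ}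
    (h : frobInner (A - P) (Z - P) ≤ 0) : frobNorm (A - P) ≤ frobNorm (A - Z) := by
  rw [frobInner_eq_sum] at h
  refine Real.sqrt_le_sqrt ?_
  have hexpand : ∀ i j, (A - Z) i j ^ 2
      = (A - P) i j ^ 2 - 2 * ((A - P) i j * (Z - P) i j) + (Z - P) i j ^ 2 := by
    intro i j
    simp only [Matrix.sub_apply]
    ring
  simp only [hexpand, Finset.sum_add_distrib, Finset.sum_sub_distrib, ← Finset.mul_sum]
  have hsq : 0 ≤ ∑ i, ∑ j, (Z - P) i j ^ 2 :=
    Finset.sum_nonneg fun _ _ => Finset.sum_nonneg fun _ _ => sq_nonneg _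
  linarith

section SpectralSum

variable {m ι : Type*} [Fintype ι]

noncomputable def spectralSum (v : ι → m → ℝ) (c : ι → ℝ) : Matrix m m ℝ :=
  ∑ i, c i • vecMulVec (v i) (v i)

theorem spectralSum_sub (v : ι → m → ℝ) (c d : ι → ℝ) :
    spectralSum v c - spectralSum v d = spectralSum v (c - d) := by
  simp only [spectralSum, ← Finset.sum_sub_distrib, Pi.sub_apply, sub_smul]

theorem posSemidef_spectralSum [Fintype m] (v : ι → m → ℝ) {c : ι → ℝ} (hc : ∀ i, 0 ≤ c i) :
    (spectralSum v c).PosSemidef :=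
  posSemidef_sum _ fun i _ => by
    simpa using (posSemidef_vecMulVec_self_star (v i)).smul (hc i)

variable [Fintype m] [DecidableEq ι]

theorem trace_spectralSum {v : ι → m → ℝ} (hv : ∀ i j, v i ⬝ᵥ v j = if i = j then 1 else 0)
    (c : ι → ℝ) : (spectralSum v c).trace = ∑ i, c i := by
  simp [spectralSum, trace_sum, hv]

theorem dotProduct_mulVec_spectralSum {v : ι → m → ℝ}
    (hv : ∀ i j, v i ⬝ᵥ v j = if i = j then 1 else 0) (c : ι → ℝ) (i : ι) :
    v i ⬝ᵥ spectralSum v c *ᵥ v i = c i := by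
  simp only [spectralSum, sum_mulVec, dotProduct_sum, smul_mulVec, dotProduct_smul,
    dotProduct_mulVec, vecMul_vecMulVec, smul_dotProduct, hv, smul_eq_mul]
  simp

theorem spectralSum_one {v : ι → ι → ℝ} (hv : ∀ i j, v i ⬝ᵥ v j = if i = j then 1 else 0) :
    spectralSum v 1 = 1 := by
  have hrows : of v * (of v)ᵀ = 1 := by
    ext i j
    simpa [mul_apply, one_apply, dotProduct] using hv i j
  have hcols := mul_eq_one_comm.mp hrows
  ext j k
  simpa [spectralSum, Matrix.sum_apply, mul_apply, vecMulVec_apply] using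
    congrFun (congrFun hcols j) k

end SpectralSum

theorem frobInner_spectralSum {n : ℕ} (v : Fin n → Fin n → ℝ) (c : Fin n → ℝ)
    (Y : Matrix (Fin n) (Fin n) ℝ) :
    frobInner (spectralSum v c) Y = ∑ i, c i * (v i ⬝ᵥ Y *ᵥ v i) := by
  simp [frobInner, spectralSum, Finset.sum_mul, trace_sum, vecMulVec_mul, vecMul_transpose]

theorem trace_eq_sum_dotProduct_mulVec {n : ℕ} {v : Fin n → Fin n → ℝ}
    (hv : ∀ i j, v i ⬝ᵥ v j = if i = j then 1 else 0) (Z : Matrix (Fin n) (Fin n) ℝ) :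
    Z.trace = ∑ i, v i ⬝ᵥ Z *ᵥ v i := by
  simpa [spectralSum_one hv, frobInner] using frobInner_spectralSum v 1 Z

theorem isProjOn_spectrahedron_spectralSum {n : ℕ} {v : Fin n → Fin n → ℝ}
    (hv : ∀ i j, v i ⬝ᵥ v j = if i = j then 1 else 0) {lam : Fin n → ℝ} {t : ℝ}
    (ht : waterFill lam t = 1) :
    IsProjOn (spectrahedron n) (spectralSum v lam) (spectralSum v fun i => max 0 (lam i - t)) := by
  set μ : Fin n → ℝ := fun i => max 0 (lam i - t)
  refine ⟨⟨posSemidef_spectralSum v fun i => le_max_left _ _, (trace_spectralSum hv μ).trans ht⟩,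
    fun Z ⟨hZ, hZtr⟩ => frobNorm_sub_le_of_frobInner_nonpos ?_⟩
  set z : Fin n → ℝ := fun i => v i ⬝ᵥ Z *ᵥ v i
  have hz : ∀ i, 0 ≤ z i := fun i => by simpa using hZ.dotProduct_mulVec_nonneg (v i)
  have hzsum : ∑ i, z i = 1 := (trace_eq_sum_dotProduct_mulVec hv Z).symm.trans hZtr
  calc frobInner (spectralSum v lam - spectralSum v μ) (Z - spectralSum v μ)
      = ∑ i, (lam i - μ i) * (z i - μ i) := by
        simp only [spectralSum_sub, frobInner_spectralSum, sub_mulVec,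
          dotProduct_sub, dotProduct_mulVec_spectralSum hv, Pi.sub_apply, z]
    _ ≤ ∑ i, t * (z i - μ i) := Finset.sum_le_sum fun i _ => sub_max_sub_mul_le _ _ (hz i)
    _ = 0 := by
        rw [← Finset.mul_sum, Finset.sum_sub_distrib, hzsum, show ∑ i, μ i = 1 from ht, sub_self,
          mul_zero]

theorem stmt0_general (n : ℕ) (hn : 1 ≤ n) (M : Matrix (Fin n) (Fin n) ℝ)
    (lam : Fin n → ℝ) (v : Fin n → Fin n → ℝ)
    (hdecomp : IsEigenDecomp M lam v) :
    (∃! lambda : ℝ, ∑ i, max 0 (lam i - lambda) = 1) ∧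
      ∀ lambda : ℝ, (∑ i, max 0 (lam i - lambda) = 1) →
        IsProjOn (spectrahedron n) M
          (∑ i, max 0 (lam i - lambda) • Matrix.vecMulVec (v i) (v i)) := by
  obtain ⟨-, horthonormal, rfl⟩ := hdecomp
  have : Nonempty (Fin n) := ⟨⟨0, hn⟩⟩
  exact ⟨existsUnique_waterFill_eq lam one_pos,
    fun _ hlambda => isProjOn_spectrahedron_spectralSum horthonormal hlambda⟩

/-- projection onto the spectrahedron. -/
theorem stmt0 (n : ℕ) (hn : 1 ≤ n) (M : Matrix (Fin n) (Fin n) ℝ) (hM : M.IsSymm)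
    (lam : Fin n → ℝ) (v : Fin n → Fin n → ℝ)
    (hdecomp : IsEigenDecomp M lam v) :
    (∃! lambda : ℝ, ∑ i, max 0 (lam i - lambda) = 1) ∧
      ∀ lambda : ℝ, (∑ i, max 0 (lam i - lambda) = 1) →
        IsProjOn (spectrahedron n) M
          (∑ i, max 0 (lam i - lambda) • Matrix.vecMulVec (v i) (v i)) :=
  stmt0_general n hn M lam v hdecomp

end LRSGD
end

section
/- Let M be an n×n real symmetric matrix with eigendecomposition M = Σ_{i=1}^n λ_i v_i v_iᵀ (λ_1 ≥ ... ≥ λ_n, orthonormal v_i). If rank(Π_{S_n}[M]) = r, then Π_{S_n}[M] = Σ_{i=1}^r (λ_i − λ) v_i v_iᵀ, where λ is the unique scalar with Σ_{i=1}^r (λ_i − λ) = 1; in particular, the projection is determined by only the top r eigenvalues and corresponding eigenvectors of M. -/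
open scoped BigOperators
open MeasureTheory
open scoped Matrix

namespace LRSGD

/-!
Let `θ` solve `∑ᵢ max (λᵢ - θ) 0 = 1` and put `Q = ∑ᵢ μᵢ vᵢ vᵢᵀ` with `μᵢ = max (λᵢ - θ) 0`.
Then `Q` lies in the spectrahedron, and in the eigenbasis of `M` the variational inequality
`⟪M - Q, Z - Q⟫ ≤ 0` becomes `∑ᵢ (λᵢ - μᵢ) (zᵢ - μᵢ) ≤ 0` for the (nonnegative, unit-sum) diagonal
`zᵢ` of the rotated `Z`; it holds because `λᵢ - μᵢ = θ` where `μᵢ > 0` and `λᵢ - μᵢ ≤ θ` elsewhere.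
By Pythagoras this inequality forces every nearest point `P` to be `Q`. As the `λᵢ` are sorted,
the support of `μ` is an initial segment of length `rank Q = r`, on which `μᵢ = λᵢ - θ`.
-/

open Matrix

theorem eq_of_norm_sub_le_of_inner_sub_nonpos {E : Type*} [NormedAddCommGroup E]
    [InnerProductSpace ℝ E] {m p q : E} (hp : ‖m - p‖ ≤ ‖m - q‖)
    (hq : inner ℝ (m - q) (p - q) ≤ 0) : p = q := by
  have hpyth : ‖m - p‖ ^ 2 = ‖m - q‖ ^ 2 - 2 * inner ℝ (m - q) (p - q) + ‖p - q‖ ^ 2 := by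
    rw [← norm_sub_sq_real, sub_sub_sub_cancel_right]
  have : ‖p - q‖ ^ 2 ≤ 0 := by nlinarith [norm_nonneg (m - p), norm_nonneg (m - q)]
  exact sub_eq_zero.mp (norm_eq_zero.mp (by nlinarith [norm_nonneg (p - q)]))

def toEuclidean {n : ℕ} (A : Matrix (Fin n) (Fin n) ℝ) : EuclideanSpace ℝ (Fin n × Fin n) :=
  WithLp.toLp 2 fun p => A p.1 p.2

theorem toEuclidean_sub {n : ℕ} (A B : Matrix (Fin n) (Fin n) ℝ) :
    toEuclidean (A - B) = toEuclidean A - toEuclidean B := rfl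

theorem toEuclidean_injective {n : ℕ} : Function.Injective (toEuclidean (n := n)) :=
  fun _ _ h => Matrix.ext fun i j => congrFun (congrArg WithLp.ofLp h) (i, j)

theorem frobNorm_eq_norm_toEuclidean {n : ℕ} (A : Matrix (Fin n) (Fin n) ℝ) :
    frobNorm A = ‖toEuclidean A‖ := by
  simp [frobNorm, toEuclidean, EuclideanSpace.norm_eq, Fintype.sum_prod_type]

theorem frobInner_eq_inner_toEuclidean {n : ℕ} (A B : Matrix (Fin n) (Fin n) ℝ) :
    frobInner A B = inner ℝ (toEuclidean A) (toEuclidean B) := by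
  simp [frobInner, toEuclidean, PiLp.inner_apply, Fintype.sum_prod_type, Matrix.trace,
    Matrix.mul_apply, mul_comm]

theorem IsProjOn.eq_of_frobInner_nonpos {n : ℕ} {S : Set (Matrix (Fin n) (Fin n) ℝ)}
    {M P Q : Matrix (Fin n) (Fin n) ℝ} (hP : IsProjOn S M P) (hQ : Q ∈ S)
    (hvar : ∀ Z ∈ S, frobInner (M - Q) (Z - Q) ≤ 0) : P = Q := by
  refine toEuclidean_injective (eq_of_norm_sub_le_of_inner_sub_nonpos (m := toEuclidean M) ?_ ?_)
  · simpa only [← toEuclidean_sub, ← frobNorm_eq_norm_toEuclidean] using hP.2 Q hQ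
  · simpa only [← toEuclidean_sub, ← frobInner_eq_inner_toEuclidean] using hvar P hP.1

theorem exists_sum_max_sub_eq {ι : Type*} [Fintype ι] [Nonempty ι] (a : ι → ℝ) {c : ℝ}
    (hc : 0 ≤ c) : ∃ θ, ∑ i, max (a i - θ) 0 = c := by
  obtain ⟨i₀, hi₀⟩ := Finite.exists_max a
  set f : ℝ → ℝ := fun θ => ∑ i, max (a i - θ) 0
  have hcont : Continuous f := by fun_prop
  have hf_top : f (a i₀) = 0 :=
    Finset.sum_eq_zero fun i _ => max_eq_right (sub_nonpos.mpr (hi₀ i))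
  have hf_low : c ≤ f (a i₀ - c) := by
    calc c = max (a i₀ - (a i₀ - c)) 0 := by rw [sub_sub_cancel, max_eq_left hc]
      _ ≤ f (a i₀ - c) :=
        Finset.single_le_sum (f := fun i => max (a i - (a i₀ - c)) 0)
          (fun i _ => le_max_right _ _) (Finset.mem_univ i₀)
  obtain ⟨θ, -, hθ⟩ := intermediate_value_Icc' (sub_le_self _ hc) hcont.continuousOn
    ⟨hf_top.le.trans hc, hf_low⟩
  exact ⟨θ, hθ⟩

theorem sum_sub_max_mul_sub_max_nonpos {ι : Type*} [Fintype ι] (a z : ι → ℝ) (θ : ℝ)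
    (hz : ∀ i, 0 ≤ z i) (hsum : ∑ i, z i = ∑ i, max (a i - θ) 0) :
    ∑ i, (a i - max (a i - θ) 0) * (z i - max (a i - θ) 0) ≤ 0 := by
  have hterm : ∀ i, (a i - max (a i - θ) 0) * (z i - max (a i - θ) 0)
      ≤ θ * (z i - max (a i - θ) 0) := by
    intro i
    rcases le_total (a i) θ with h | h
    · rw [max_eq_right (sub_nonpos.mpr h)]
      nlinarith [hz i]
    · rw [max_eq_left (sub_nonneg.mpr h), sub_sub_cancel]
  calc ∑ i, (a i - max (a i - θ) 0) * (z i - max (a i - θ) 0)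
      ≤ ∑ i, θ * (z i - max (a i - θ) 0) := Finset.sum_le_sum fun i _ => hterm i
    _ = 0 := by rw [← Finset.mul_sum, Finset.sum_sub_distrib, hsum, sub_self, mul_zero]

theorem eq_of_sum_sub_eq {ι : Type*} [Fintype ι] {a : ι → ℝ} {c x y : ℝ} (hc : c ≠ 0)
    (hx : ∑ i, (a i - x) = c) (hy : ∑ i, (a i - y) = c) : x = y := by
  have hcard : (Fintype.card ι : ℝ) ≠ 0 := by
    intro h
    have : IsEmpty ι := Fintype.card_eq_zero_iff.mp (by exact_mod_cast h)
    rw [Finset.univ_eq_empty, Finset.sum_empty] at hx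
    exact hc hx.symm
  simp only [Finset.sum_sub_distrib, Finset.sum_const, Finset.card_univ, nsmul_eq_mul] at hx hy
  exact mul_left_cancel₀ hcard (by linarith)

theorem Fin.lt_card_iff_of_antitone {n : ℕ} {p : Fin n → Prop} [DecidablePred p]
    (hp : Antitone p) (i : Fin n) : p i ↔ (i : ℕ) < Fintype.card {j // p j} := by
  rw [Fintype.card_subtype]
  constructor
  · intro hi
    have hsub : Finset.Iic i ⊆ Finset.filter (fun j => p j) Finset.univ := fun j hj =>
      Finset.mem_filter.mpr ⟨Finset.mem_univ j, hp (Finset.mem_Iic.mp hj) hi⟩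
    simpa using Finset.card_le_card hsub
  · intro hi
    by_contra hpi
    have hsub : Finset.filter (fun j => p j) Finset.univ ⊆ Finset.Iio i := fun j hj =>
      Finset.mem_Iio.mpr (lt_of_not_ge fun hij => hpi (hp hij (Finset.mem_filter.mp hj).2))
    have := Finset.card_le_card hsub
    simp only [Fin.card_Iio] at this
    omega

theorem Fin.sum_castLE_eq_sum {M : Type*} [AddCommMonoid M] {r n : ℕ} (h : r ≤ n)
    (f : Fin n → M) (hf : ∀ i : Fin n, r ≤ (i : ℕ) → f i = 0) :
    ∑ i : Fin r, f (Fin.castLE h i) = ∑ i, f i := by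
  refine Finset.sum_of_injOn (Fin.castLE h) (Fin.castLE_injective h).injOn
    (fun _ _ => Finset.mem_coe.mpr (Finset.mem_univ _)) (fun i _ hi => hf i ?_) fun _ _ => rfl
  by_contra hlt
  exact hi ⟨⟨i, by omega⟩, Finset.mem_coe.mpr (Finset.mem_univ _), rfl⟩

theorem of_mul_transpose_eq_one {m R : Type*} [Fintype m] [DecidableEq m] [CommSemiring R]
    {v : m → m → R} (hv : ∀ i j, ∑ k, v i k * v j k = if i = j then 1 else 0) :
    of v * (of v)ᵀ = 1 := by
  ext i j
  simp [Matrix.mul_apply, Matrix.one_apply, hv]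

theorem sum_smul_vecMulVec_eq_transpose_mul_diagonal_mul {m R : Type*} [Fintype m]
    [DecidableEq m] [CommSemiring R] (v : m → m → R) (d : m → R) :
    ∑ i, d i • vecMulVec (v i) (v i) = (of v)ᵀ * diagonal d * of v := by
  ext a b
  rw [Matrix.mul_apply]
  simp only [Matrix.sum_apply, Matrix.smul_apply, vecMulVec_apply, mul_diagonal, transpose_apply,
    of_apply, smul_eq_mul]
  exact Finset.sum_congr rfl fun i _ => by ring

theorem rank_transpose_mul_diagonal_mul {m K : Type*} [Fintype m] [DecidableEq m] [Field K]
    [DecidableEq K] {W : Matrix m m K} (hW : W * Wᵀ = 1) (d : m → K) :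
    (Wᵀ * diagonal d * W).rank = Fintype.card {i // d i ≠ 0} := by
  rw [rank_mul_eq_left_of_isUnit_det W _ (isUnit_det_of_right_inverse hW),
    rank_mul_eq_right_of_isUnit_det Wᵀ _ (isUnit_det_of_left_inverse hW), rank_diagonal]

theorem transpose_mul_mul_mul_transpose_mul {m R : Type*} [Fintype m] [DecidableEq m]
    [CommRing R] {W : Matrix m m R} (hW : W * Wᵀ = 1) (Z : Matrix m m R) :
    Wᵀ * (W * Z * Wᵀ) * W = Z := by
  have hW' : Wᵀ * W = 1 := mul_eq_one_comm.mp hW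
  simp only [← Matrix.mul_assoc, hW', Matrix.one_mul]
  rw [Matrix.mul_assoc, hW', Matrix.mul_one]

section Orthogonal

variable {n : ℕ} {W : Matrix (Fin n) (Fin n) ℝ}

theorem frobInner_diagonal_left (d : Fin n → ℝ) (B : Matrix (Fin n) (Fin n) ℝ) :
    frobInner (diagonal d) B = ∑ i, d i * B i i := by
  simp [frobInner, Matrix.trace]

theorem frobInner_transpose_mul_mul (hW : W * Wᵀ = 1) (A B : Matrix (Fin n) (Fin n) ℝ) :
    frobInner (Wᵀ * A * W) (Wᵀ * B * W) = frobInner A B := by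
  simp only [frobInner, transpose_mul, transpose_transpose, Matrix.mul_assoc]
  rw [← Matrix.mul_assoc W Wᵀ, hW, Matrix.one_mul, trace_mul_comm Wᵀ, Matrix.mul_assoc,
    Matrix.mul_assoc, hW, Matrix.mul_one]

theorem transpose_mul_diagonal_mul_mem_spectrahedron (hW : W * Wᵀ = 1) {μ : Fin n → ℝ}
    (hμ : ∀ i, 0 ≤ μ i) (hsum : ∑ i, μ i = 1) : Wᵀ * diagonal μ * W ∈ spectrahedron n := by
  refine ⟨(posSemidef_diagonal_iff.mpr hμ).conjTranspose_mul_mul_same W, ?_⟩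
  rw [trace_mul_cycle, hW, Matrix.one_mul, trace_diagonal, hsum]

theorem mul_mul_transpose_mem_spectrahedron (hW : W * Wᵀ = 1) {Z : Matrix (Fin n) (Fin n) ℝ}
    (hZ : Z ∈ spectrahedron n) : W * Z * Wᵀ ∈ spectrahedron n := by
  refine ⟨hZ.1.mul_mul_conjTranspose_same W, ?_⟩
  rw [trace_mul_cycle, mul_eq_one_comm.mp hW, Matrix.one_mul, hZ.2]

theorem IsProjOn.eq_transpose_mul_diagonal_max_sub_mul (hW : W * Wᵀ = 1)
    {lam : Fin n → ℝ} {θ : ℝ} (hθ : ∑ i, max (lam i - θ) 0 = 1)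
    {P : Matrix (Fin n) (Fin n) ℝ} (hP : IsProjOn (spectrahedron n) (Wᵀ * diagonal lam * W) P) :
    P = Wᵀ * diagonal (fun i => max (lam i - θ) 0) * W := by
  refine hP.eq_of_frobInner_nonpos
    (transpose_mul_diagonal_mul_mem_spectrahedron hW (fun i => le_max_right _ _) hθ)
    fun Z hZ => ?_
  obtain ⟨hZ'psd, hZ'tr⟩ := mul_mul_transpose_mem_spectrahedron hW hZ
  rw [← transpose_mul_mul_mul_transpose_mul hW Z, ← Matrix.sub_mul, ← Matrix.mul_sub,
    ← Matrix.sub_mul, ← Matrix.mul_sub, frobInner_transpose_mul_mul hW, diagonal_sub,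
    frobInner_diagonal_left]
  simp only [Matrix.sub_apply, diagonal_apply_eq]
  refine sum_sub_max_mul_sub_max_nonpos lam (fun i => (W * Z * Wᵀ) i i) θ
    (fun i => hZ'psd.diag_nonneg) ?_
  rw [hθ, ← hZ'tr, trace]
  rfl

end Orthogonal

theorem nonempty_of_mem_spectrahedron {n : ℕ} {P : Matrix (Fin n) (Fin n) ℝ}
    (hP : P ∈ spectrahedron n) : Nonempty (Fin n) := by
  rcases n with _ | n
  · simp [spectrahedron, trace] at hP
  · exact ⟨0⟩

theorem stmt2_general (n r : ℕ) (hrn : r ≤ n)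
    (M : Matrix (Fin n) (Fin n) ℝ)
    (lam : Fin n → ℝ) (v : Fin n → Fin n → ℝ)
    (hdecomp : IsEigenDecomp M lam v)
    (P : Matrix (Fin n) (Fin n) ℝ)
    (hP : IsProjOn (spectrahedron n) M P)
    (hrank : P.rank = r) :
    (∃! lambda : ℝ, ∑ i : Fin r, (lam (Fin.castLE hrn i) - lambda) = 1) ∧
      ∀ lambda : ℝ, (∑ i : Fin r, (lam (Fin.castLE hrn i) - lambda) = 1) →
        P = ∑ i : Fin r, (lam (Fin.castLE hrn i) - lambda) •
          Matrix.vecMulVec (v (Fin.castLE hrn i)) (v (Fin.castLE hrn i)) := by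
  obtain ⟨hanti, horth, rfl⟩ := hdecomp
  have hW := of_mul_transpose_eq_one horth
  have := nonempty_of_mem_spectrahedron hP.1
  obtain ⟨θ, hθ⟩ := exists_sum_max_sub_eq lam zero_le_one
  rw [sum_smul_vecMulVec_eq_transpose_mul_diagonal_mul] at hP
  have hPθ := hP.eq_transpose_mul_diagonal_max_sub_mul hW hθ
  have htop : ∀ i : Fin n, θ < lam i ↔ (i : ℕ) < r := by
    intro i
    rw [Fin.lt_card_iff_of_antitone (fun i j hij => (hanti hij).trans_lt') i, ← hrank, hPθ,
      rank_transpose_mul_diagonal_mul hW]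
    simp only [ne_eq, max_eq_right_iff, sub_nonpos, not_le]
  have hzero : ∀ i : Fin n, r ≤ (i : ℕ) → max (lam i - θ) 0 = 0 :=
    fun i hi => max_eq_right (sub_nonpos.mpr (not_lt.mp ((htop i).not.mpr hi.not_gt)))
  have hhead : ∀ i : Fin r, max (lam (Fin.castLE hrn i) - θ) 0 = lam (Fin.castLE hrn i) - θ :=
    fun i => max_eq_left (sub_nonneg.mpr ((htop _).mpr i.isLt).le)
  have hθr : ∑ i : Fin r, (lam (Fin.castLE hrn i) - θ) = 1 := by
    rw [← hθ, ← Fin.sum_castLE_eq_sum hrn _ hzero]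
    exact Finset.sum_congr rfl fun i _ => (hhead i).symm
  refine ⟨⟨θ, hθr, fun x hx => eq_of_sum_sub_eq one_ne_zero hx hθr⟩, fun x hx => ?_⟩
  rw [eq_of_sum_sub_eq one_ne_zero hx hθr, hPθ,
    ← sum_smul_vecMulVec_eq_transpose_mul_diagonal_mul,
    ← Fin.sum_castLE_eq_sum hrn _ fun i hi => by rw [hzero i hi, zero_smul]]
  simp only [hhead]

/-- if the projection onto the spectrahedron has rank r, then it is
determined by the top r eigenvalues/eigenvectors of M. -/
theorem stmt2 (n r : ℕ) (hr : 1 ≤ r) (hrn : r ≤ n)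
    (M : Matrix (Fin n) (Fin n) ℝ) (hM : M.IsSymm)
    (lam : Fin n → ℝ) (v : Fin n → Fin n → ℝ)
    (hdecomp : IsEigenDecomp M lam v)
    (P : Matrix (Fin n) (Fin n) ℝ)
    (hP : IsProjOn (spectrahedron n) M P)
    (hrank : P.rank = r) :
    (∃! lambda : ℝ, ∑ i : Fin r, (lam (Fin.castLE hrn i) - lambda) = 1) ∧
      ∀ lambda : ℝ, (∑ i : Fin r, (lam (Fin.castLE hrn i) - lambda) = 1) →
        P = ∑ i : Fin r, (lam (Fin.castLE hrn i) - lambda) •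
          Matrix.vecMulVec (v (Fin.castLE hrn i)) (v (Fin.castLE hrn i)) :=
  stmt2_general n r hrn M lam v hdecomp P hP hrank

end LRSGD
end

section
/- Let f : 𝕊^n → ℝ be convex and differentiable, and let X* be a minimizer of f over the spectrahedron S_n with eigendecomposition X* = Σ_{i=1}^r λ_i v_i v_iᵀ where λ_i > 0 for all i ∈ [r]. Then each v_i (i ∈ [r]) is an eigenvector of ∇f(X*) corresponding to its smallest eigenvalue λ_n(∇f(X*)); equivalently, {v_i}_{i=1}^r are top eigenvectors of −∇f(X*) corresponding to λ_1(−∇f(X*)) = −λ_n(∇f(X*)). -/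
open scoped BigOperators
open MeasureTheory
open scoped Matrix

/-!
First-order optimality on the convex set `S_n` gives `⟪G, X*⟫ ≤ ⟪G, Z⟫` for every `Z ∈ S_n`,
where `G = ∇f(X*)`. Testing `Z = w wᵀ` for a unit eigenvector `w` of `λ_n(G)` yields
`⟪G, X*⟫ ≤ λ_n(G)`, i.e. `⟪G - λ_n(G) I, X*⟫ ≤ 0` because `tr X* = 1`. But `G - λ_n(G) I ⪰ 0`, so
`⟪G - λ_n(G) I, X*⟫ = Σ λ_i v_iᵀ (G - λ_n(G) I) v_i` is a sum of nonnegative terms with positive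
weights; each `v_iᵀ (G - λ_n(G) I) v_i` vanishes, and for a positive semidefinite matrix this forces
`(G - λ_n(G) I) v_i = 0`.
-/

open Matrix

theorem Matrix.sum_smul_vecMulVec_self_mulVec {ι κ R : Type*} [Fintype ι] [Fintype κ]
    [CommSemiring R] (c : κ → R) (w : κ → ι → R) (u : ι → R) :
    (∑ j, c j • vecMulVec (w j) (w j)) *ᵥ u = ∑ j, (c j * (w j ⬝ᵥ u)) • w j := by
  simp only [sum_mulVec, smul_mulVec, vecMulVec_mulVec, op_smul_eq_smul, smul_smul]

theorem Matrix.sum_vecMulVec_self_eq_one {ι R : Type*} [Fintype ι] [DecidableEq ι] [CommRing R]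
    (w : ι → ι → R) (hw : ∀ i j, (∑ k, w i k * w j k) = if i = j then (1 : R) else 0) :
    ∑ j, vecMulVec (w j) (w j) = 1 := by
  have hrows : of w * (of w)ᵀ = 1 := by
    ext i j
    simpa [mul_apply, one_apply] using hw i j
  rw [← mul_eq_one_comm.mp hrows]
  ext k l
  simp [mul_apply, Matrix.sum_apply, vecMulVec_apply]

theorem Matrix.posSemidef_vecMulVec_self {ι R : Type*} [Fintype ι] [CommRing R] [PartialOrder R]
    [StarRing R] [StarOrderedRing R] [TrivialStar R] (a : ι → R) :
    (vecMulVec a a).PosSemidef := by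
  simpa using posSemidef_vecMulVec_self_star a

namespace LRSGD

theorem frobInner_sub_right {n : ℕ} (A B C : Matrix (Fin n) (Fin n) ℝ) :
    frobInner A (B - C) = frobInner A B - frobInner A C := by
  simp only [frobInner, transpose_sub, Matrix.mul_sub, trace_sub]

theorem frobInner_vecMulVec_self {n : ℕ} (A : Matrix (Fin n) (Fin n) ℝ) (a : Fin n → ℝ) :
    frobInner A (vecMulVec a a) = a ⬝ᵥ (A *ᵥ a) := by
  rw [frobInner, transpose_vecMulVec, mul_vecMulVec, trace_vecMulVec, dotProduct_comm]

theorem frobInner_sum_smul_vecMulVec_self {n : ℕ} {κ : Type*} [Fintype κ]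
    (A : Matrix (Fin n) (Fin n) ℝ) (c : κ → ℝ) (v : κ → Fin n → ℝ) :
    frobInner A (∑ t, c t • vecMulVec (v t) (v t)) = ∑ t, c t * (v t ⬝ᵥ (A *ᵥ v t)) := by
  simp only [← frobInner_vecMulVec_self, frobInner, transpose_sum, Matrix.mul_sum, trace_sum,
    transpose_smul, Matrix.mul_smul, trace_smul, smul_eq_mul]

theorem frobInner_sub_smul_one_left {n : ℕ} (A X : Matrix (Fin n) (Fin n) ℝ) (m : ℝ) :
    frobInner (A - m • 1) X = frobInner A X - m * X.trace := by
  simp [frobInner, Matrix.sub_mul, trace_sub, trace_smul, trace_transpose]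

theorem convex_spectrahedron (n : ℕ) : Convex ℝ (spectrahedron n) := by
  intro X hX Y hY a b ha hb hab
  exact ⟨(hX.1.smul ha).add (hY.1.smul hb), by simp [trace_add, trace_smul, hX.2, hY.2, hab]⟩

theorem vecMulVec_self_mem_spectrahedron {n : ℕ} {a : Fin n → ℝ} (ha : a ⬝ᵥ a = 1) :
    vecMulVec a a ∈ spectrahedron n :=
  ⟨posSemidef_vecMulVec_self a, by rw [trace_vecMulVec, ha]⟩

theorem IsMinimizerOn.frobInner_gradient_le {n : ℕ} {f : Matrix (Fin n) (Fin n) ℝ → ℝ}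
    {g : Matrix (Fin n) (Fin n) ℝ → Matrix (Fin n) (Fin n) ℝ} {S : Set (Matrix (Fin n) (Fin n) ℝ)}
    {X : Matrix (Fin n) (Fin n) ℝ} (hmin : IsMinimizerOn f S X) (hS : Convex ℝ S)
    (hgrad : IsGradient f g) {Z : Matrix (Fin n) (Fin n) ℝ} (hZ : Z ∈ S) :
    frobInner (g X) X ≤ frobInner (g X) Z := by
  have hsegment : ∀ t ∈ Set.Icc (0 : ℝ) 1, X + t • (Z - X) ∈ S := fun t ht => by
    convert hS hmin.1 hZ (sub_nonneg.mpr ht.2) ht.1 (sub_add_cancel 1 t) using 1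
    module
  have hlocmin : IsLocalMinOn (fun t : ℝ => f (X + t • (Z - X))) (Set.Icc 0 1) 0 :=
    IsMinOn.localize fun t ht => by simpa using hmin.2 _ (hsegment t ht)
  have hcone : (1 : ℝ) ∈ posTangentConeAt (Set.Icc (0 : ℝ) 1) 0 :=
    mem_posTangentConeAt_of_segment_subset (by simp [segment_eq_Icc])
  have hderiv := hlocmin.hasFDerivWithinAt_nonneg
    (hgrad X (Z - X)).hasDerivWithinAt.hasFDerivWithinAt hcone
  rw [ContinuousLinearMap.toSpanSingleton_apply, one_smul, frobInner_sub_right] at hderiv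
  linarith

theorem IsEigenDecomp.dotProduct_eq {n : ℕ} {M : Matrix (Fin n) (Fin n) ℝ} {mu : Fin n → ℝ}
    {w : Fin n → Fin n → ℝ} (hM : IsEigenDecomp M mu w) (i j : Fin n) :
    w i ⬝ᵥ w j = if i = j then 1 else 0 :=
  hM.2.1 i j

theorem IsEigenDecomp.mulVec_eq {n : ℕ} {M : Matrix (Fin n) (Fin n) ℝ} {mu : Fin n → ℝ}
    {w : Fin n → Fin n → ℝ} (hM : IsEigenDecomp M mu w) (j : Fin n) :
    M *ᵥ w j = mu j • w j := by
  rw [hM.2.2, sum_smul_vecMulVec_self_mulVec, Finset.sum_eq_single j]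
  · rw [hM.dotProduct_eq, if_pos rfl, mul_one]
  · intro i _ hij
    rw [hM.dotProduct_eq, if_neg hij, mul_zero, zero_smul]
  · simp

theorem IsEigenDecomp.posSemidef_sub_smul_one {n : ℕ} {M : Matrix (Fin n) (Fin n) ℝ}
    {mu : Fin n → ℝ} {w : Fin n → Fin n → ℝ} (hM : IsEigenDecomp M mu w) {m : ℝ}
    (hm : ∀ j, m ≤ mu j) : (M - m • 1).PosSemidef := by
  have hsplit : M - m • 1 = ∑ j, (mu j - m) • vecMulVec (w j) (w j) := by
    rw [hM.2.2, ← sum_vecMulVec_self_eq_one w hM.2.1, Finset.smul_sum, ← Finset.sum_sub_distrib]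
    simp only [sub_smul]
  rw [hsplit]
  exact posSemidef_sum _ fun j _ =>
    (posSemidef_vecMulVec_self (w j)).smul (sub_nonneg.mpr (hm j))

theorem mulVec_eq_zero_of_frobInner_sum_smul_vecMulVec_nonpos {n : ℕ} {κ : Type*} [Fintype κ]
    {H : Matrix (Fin n) (Fin n) ℝ} (hH : H.PosSemidef) {c : κ → ℝ} (hc : ∀ t, 0 < c t)
    {v : κ → Fin n → ℝ} (hHv : frobInner H (∑ t, c t • vecMulVec (v t) (v t)) ≤ 0)
    (t : κ) : H *ᵥ v t = 0 := by
  have hnonneg : ∀ s ∈ Finset.univ, 0 ≤ c s * (v s ⬝ᵥ (H *ᵥ v s)) := fun s _ =>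
    mul_nonneg (hc s).le (by simpa using hH.dotProduct_mulVec_nonneg (v s))
  rw [frobInner_sum_smul_vecMulVec_self] at hHv
  have hterm := (Finset.sum_eq_zero_iff_of_nonneg hnonneg).mp
    (le_antisymm hHv (Finset.sum_nonneg hnonneg)) t (Finset.mem_univ t)
  have hvHv : v t ⬝ᵥ (H *ᵥ v t) = 0 := (mul_eq_zero.mp hterm).resolve_left (hc t).ne'
  simpa using (hH.dotProduct_mulVec_zero_iff (v t)).mp (by simpa using hvHv)

/-- at an optimal solution, the eigenvectors of X* (with positive
eigenvalue) are eigenvectors of ∇f(X*) corresponding to its smallest eigenvalue. -/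
theorem stmt3 (n r : ℕ) (hr : 1 ≤ r) (hrn : r ≤ n)
    (f : Matrix (Fin n) (Fin n) ℝ → ℝ)
    (g : Matrix (Fin n) (Fin n) ℝ → Matrix (Fin n) (Fin n) ℝ)
    (hgrad : IsGradient f g)
    (Xstar : Matrix (Fin n) (Fin n) ℝ)
    (hmin : IsMinimizerOn f (spectrahedron n) Xstar)
    (lamX : Fin r → ℝ) (v : Fin r → Fin n → ℝ)
    (hpos : ∀ i, 0 < lamX i)
    (hXdecomp : Xstar = ∑ i, lamX i • Matrix.vecMulVec (v i) (v i))
    (mu : Fin n → ℝ) (w : Fin n → Fin n → ℝ)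
    (hmu : IsEigenDecomp (g Xstar) mu w) :
    ∀ i : Fin r, (g Xstar).mulVec (v i) = mu ⟨n - 1, by omega⟩ • v i := by
  intro i
  set G := g Xstar
  set N : Fin n := ⟨n - 1, by omega⟩
  have hH : (G - mu N • 1).PosSemidef :=
    hmu.posSemidef_sub_smul_one fun j => hmu.1 (Fin.le_def.mpr (Nat.le_sub_one_of_lt j.isLt))
  have hwN : w N ⬝ᵥ w N = 1 := by rw [hmu.dotProduct_eq, if_pos rfl]
  have hopt : frobInner G Xstar ≤ mu N := calc
    frobInner G Xstar ≤ frobInner G (vecMulVec (w N) (w N)) :=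
      hmin.frobInner_gradient_le (convex_spectrahedron n) hgrad
        (vecMulVec_self_mem_spectrahedron hwN)
    _ = mu N := by rw [frobInner_vecMulVec_self, hmu.mulVec_eq, dotProduct_smul, hwN, smul_eq_mul,
      mul_one]
  have hHX : frobInner (G - mu N • 1) Xstar ≤ 0 := by
    rw [frobInner_sub_smul_one_left, hmin.1.2, mul_one]
    linarith
  rw [hXdecomp] at hHX
  have hHv := mulVec_eq_zero_of_frobInner_sum_smul_vecMulVec_nonpos hH hpos hHX i
  rwa [sub_mulVec, smul_mulVec, one_mulVec, sub_eq_zero] at hHv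

end LRSGD
end

section
/- Let X ∈ S_n with rank(X) ≤ r (1 ≤ r < n), let V ∈ ℝ^{n×r} be a matrix with orthonormal columns whose columns are eigenvectors of X spanning its range (extended arbitrarily with orthonormal vectors if rank(X) < r), let ∇̃ ∈ 𝕊^n, η > 0, and set Y = X − η∇̃. Then λ_{r+1}(Y) ≤ η(⟨VVᵀ, ∇̃⟩ − Σ_{i=1}^{r+1} λ_{n−i+1}(∇̃)), where ⟨A, B⟩ = Tr(A Bᵀ). -/
open scoped BigOperators
open MeasureTheory
open scoped Matrix

/-!
Pick a unit vector `u` orthogonal to the columns of `V` and lying in the span of the top `r + 1`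
eigenvectors of `Y`; it exists because these are `n - 1` linear conditions on `u`. Courant–Fischer
gives `λ_{r+1}(Y) ≤ uᵀ Y u = -η uᵀ ∇̃ u`, since `X u = 0`. On the other hand the columns of `V`
together with `u` form an orthonormal system of `r + 1` vectors, so by Ky Fan's principle
`⟨VVᵀ, ∇̃⟩ + uᵀ ∇̃ u` is at least the sum of the `r + 1` smallest eigenvalues of `∇̃`.
-/

open Finset

theorem Finset.sum_le_sum_mul_of_le_of_le {ι : Type*} [Fintype ι] (s : Finset ι)
    (lam t : ι → ℝ) (θ : ℝ) (hs : ∀ i ∈ s, lam i ≤ θ) (hsc : ∀ i ∉ s, θ ≤ lam i)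
    (ht₀ : ∀ i, 0 ≤ t i) (ht₁ : ∀ i, t i ≤ 1) (ht : ∑ i, t i = #s) :
    ∑ i ∈ s, lam i ≤ ∑ i, lam i * t i := by
  classical
  set g : ι → ℝ := fun i => if i ∈ s then 1 else 0
  have hg : ∑ i, g i = #s := by simp [g]
  have hlam : ∑ i ∈ s, lam i = ∑ i, lam i * g i := by simp [g]
  have hterm : ∀ i, 0 ≤ (lam i - θ) * (t i - g i) := fun i => by
    by_cases hi : i ∈ s
    · exact mul_nonneg_of_nonpos_of_nonpos (by linarith [hs i hi]) (by simp [g, hi, ht₁ i])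
    · exact mul_nonneg (by linarith [hsc i hi]) (by simp [g, hi, ht₀ i])
  have := Finset.sum_nonneg fun i (_ : i ∈ univ) => hterm i
  simp only [sub_mul, mul_sub, Finset.sum_sub_distrib, ← Finset.mul_sum, ht, hg] at this
  linarith

theorem Fin.sum_sub_one_sub_eq_sum_Ici {n m : ℕ} (hm : 0 < m) (hmn : m ≤ n) (f : Fin n → ℝ) :
    ∑ i : Fin m, f ⟨n - 1 - i, by omega⟩ = ∑ j ∈ Ici ⟨n - m, by omega⟩, f j := by
  refine Finset.sum_bij' (fun i _ => ⟨n - 1 - i, by omega⟩)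
    (fun j hj => ⟨n - 1 - j, by simp only [mem_Ici, Fin.le_def] at hj; omega⟩)
    ?_ (fun _ _ => mem_univ _) ?_ ?_ (fun _ _ => rfl)
  · intro i _; have := i.2; simp only [mem_Ici, Fin.le_def]; omega
  · intro i _; have := i.2; ext; simp only; omega
  · intro j hj; have := j.2; simp only [mem_Ici, Fin.le_def] at hj; ext; simp only; omega

namespace Matrix

theorem diag_transpose_mul_self_nonneg {m ι : Type*} [Fintype m] (A : Matrix m ι ℝ) (i : ι) :
    0 ≤ (Aᵀ * A) i i := by
  simpa [mul_apply] using Finset.sum_nonneg fun j (_ : j ∈ univ) => mul_self_nonneg (A j i)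

section

variable {ι : Type*} [Fintype ι]

theorem exists_mulVec_eq_zero_dotProduct_self_eq_one {κ : Type*} [Fintype κ] {M : Matrix κ ι ℝ}
    (h : Fintype.card κ < Fintype.card ι) : ∃ u, M *ᵥ u = 0 ∧ u ⬝ᵥ u = 1 := by
  obtain ⟨v, hv, hv0⟩ := Submodule.exists_mem_ne_zero_of_ne_bot
    (LinearMap.ker_ne_bot_of_finrank_lt (f := M.mulVecLin) (by simpa using h))
  have hpos : 0 < v ⬝ᵥ v := by simpa using dotProduct_self_star_pos_iff.mpr hv0
  refine ⟨(√(v ⬝ᵥ v))⁻¹ • v, ?_, ?_⟩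
  · rw [mulVec_smul, show M *ᵥ v = 0 from hv, smul_zero]
  · rw [smul_dotProduct, dotProduct_smul, smul_eq_mul, smul_eq_mul, ← mul_assoc, ← mul_inv,
      Real.mul_self_sqrt hpos.le, inv_mul_cancel₀ hpos.ne']

theorem trace_fromRows_mul_mul_transpose {m₁ m₂ : Type*} [Fintype m₁] [Fintype m₂]
    (A : Matrix m₁ ι ℝ) (B : Matrix m₂ ι ℝ) (M : Matrix ι ι ℝ) :
    trace (fromRows A B * M * (fromRows A B)ᵀ) = trace (A * M * Aᵀ) + trace (B * M * Bᵀ) := by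
  rw [trace_mul_cycle, transpose_fromRows, fromCols_mul_fromRows, Matrix.add_mul, trace_add,
    trace_mul_cycle A, trace_mul_cycle B]

theorem trace_replicateRow_mul_mul_transpose (u : ι → ℝ) (M : Matrix ι ι ℝ) :
    trace (replicateRow Unit u * M * (replicateRow Unit u)ᵀ) = u ⬝ᵥ M *ᵥ u := by
  rw [transpose_replicateRow, Matrix.mul_assoc, ← replicateCol_mulVec, trace_mul_comm,
    trace_replicateCol_mul_replicateRow, dotProduct_comm]

theorem fromRows_replicateRow_mul_transpose_eq_one {κ : Type*} [DecidableEq κ]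
    {A : Matrix κ ι ℝ} (hA : A * Aᵀ = 1) {u : ι → ℝ} (hAu : A *ᵥ u = 0) (hu : u ⬝ᵥ u = 1) :
    fromRows A (replicateRow Unit u) * (fromRows A (replicateRow Unit u))ᵀ = 1 := by
  rw [transpose_fromRows, fromRows_mul_fromCols, hA, transpose_replicateRow,
    ← replicateCol_mulVec, ← replicateRow_vecMul, vecMul_transpose, hAu,
    replicateRow_mul_replicateCol, hu, replicateCol_zero, replicateRow_zero, ← fromBlocks_one]
  congr

variable [DecidableEq ι]

theorem dotProduct_mulVec_transpose_mul_diagonal_mul (W : Matrix ι ι ℝ) (lam u : ι → ℝ) :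
    u ⬝ᵥ (Wᵀ * diagonal lam * W) *ᵥ u = ∑ k, lam k * (W *ᵥ u) k ^ 2 := by
  rw [← mulVec_mulVec, ← mulVec_mulVec, dotProduct_mulVec, vecMul_transpose, dotProduct,
    Finset.sum_congr rfl fun k _ => by rw [mulVec_diagonal]]
  simp only [sq, mul_left_comm]

theorem mul_dotProduct_self_le_dotProduct_mulVec {W : Matrix ι ι ℝ} (hW : W * Wᵀ = 1)
    {lam u : ι → ℝ} {θ : ℝ} (hθ : ∀ k, (W *ᵥ u) k ≠ 0 → θ ≤ lam k) :
    θ * (u ⬝ᵥ u) ≤ u ⬝ᵥ (Wᵀ * diagonal lam * W) *ᵥ u := by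
  have hu : u ⬝ᵥ u = ∑ k, 1 * (W *ᵥ u) k ^ 2 := by
    rw [← dotProduct_mulVec_transpose_mul_diagonal_mul, diagonal_one, Matrix.mul_one,
      mul_eq_one_comm.mp hW, one_mulVec]
  rw [hu, dotProduct_mulVec_transpose_mul_diagonal_mul, Finset.mul_sum]
  refine Finset.sum_le_sum fun k _ => ?_
  by_cases hk : (W *ᵥ u) k = 0
  · simp [hk]
  · rw [one_mul]; exact mul_le_mul_of_nonneg_right (hθ k hk) (sq_nonneg _)

theorem sum_le_trace_mul_mul_transpose_of_le_of_le {κ : Type*} [Fintype κ] [DecidableEq κ]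
    {W : Matrix ι ι ℝ} (hW : W * Wᵀ = 1) (lam : ι → ℝ) {F : Matrix κ ι ℝ} (hF : F * Fᵀ = 1)
    (s : Finset ι) (hs : #s = Fintype.card κ) (θ : ℝ)
    (hθs : ∀ i ∈ s, lam i ≤ θ) (hθsc : ∀ i ∉ s, θ ≤ lam i) :
    ∑ i ∈ s, lam i ≤ trace (F * (Wᵀ * diagonal lam * W) * Fᵀ) := by
  set G := W * (Fᵀ * F) * Wᵀ
  have hG : G = (F * Wᵀ)ᵀ * (F * Wᵀ) := by
    simp only [G, transpose_mul, transpose_transpose, Matrix.mul_assoc]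
  have htrace : trace (F * (Wᵀ * diagonal lam * W) * Fᵀ) = ∑ k, lam k * G k k := by
    rw [show F * (Wᵀ * diagonal lam * W) * Fᵀ = (F * Wᵀ) * (diagonal lam * (W * Fᵀ)) by
      simp only [Matrix.mul_assoc], trace_mul_comm]
    simp [G, trace, diagonal_mul, Matrix.mul_assoc]
  -- `1 - FᵀF` is an orthogonal projection, which yields `G ≤ W Wᵀ = 1` on the diagonal
  have hP : (1 - Fᵀ * F)ᵀ * (1 - Fᵀ * F) = 1 - Fᵀ * F := by
    simp only [transpose_sub, transpose_one, transpose_mul, transpose_transpose, sub_mul, mul_sub,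
      Matrix.one_mul, Matrix.mul_one, Matrix.mul_assoc]
    rw [← Matrix.mul_assoc F, hF, Matrix.one_mul]; abel
  have hG₁ : ∀ k, G k k ≤ 1 := fun k => by
    have h := diag_transpose_mul_self_nonneg ((1 - Fᵀ * F) * Wᵀ) k
    rw [transpose_mul, transpose_transpose, Matrix.mul_assoc, ← Matrix.mul_assoc _ _ Wᵀ, hP,
      Matrix.sub_mul, Matrix.mul_sub, Matrix.one_mul, hW] at h
    simpa [G, Matrix.mul_assoc, sub_apply] using h
  have hGtr : ∑ k, G k k = Fintype.card κ := by
    change trace G = _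
    rw [trace_mul_comm, ← Matrix.mul_assoc, mul_eq_one_comm.mp hW, Matrix.one_mul,
      trace_mul_comm, hF, trace_one]
  rw [htrace]
  exact Finset.sum_le_sum_mul_of_le_of_le s lam _ θ hθs hθsc
    (fun k => hG ▸ diag_transpose_mul_self_nonneg _ k) hG₁ (by rw [hGtr, hs])

end

theorem sum_fin_sub_le_trace_mul_mul_transpose {n m : ℕ} (hm : 0 < m) (hmn : m ≤ n)
    {lam : Fin n → ℝ} (hlam : Antitone lam) {W : Matrix (Fin n) (Fin n) ℝ} (hW : W * Wᵀ = 1)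
    {κ : Type*} [Fintype κ] [DecidableEq κ] {F : Matrix κ (Fin n) ℝ} (hF : F * Fᵀ = 1)
    (hκ : Fintype.card κ = m) :
    ∑ i : Fin m, lam ⟨n - 1 - i, by omega⟩ ≤ trace (F * (Wᵀ * diagonal lam * W) * Fᵀ) := by
  rw [Fin.sum_sub_one_sub_eq_sum_Ici hm hmn]
  refine sum_le_trace_mul_mul_transpose_of_le_of_le hW lam hF _ ?_ _
    (fun i hi => hlam (mem_Ici.mp hi)) (fun i hi => hlam (not_le.mp (mem_Ici.not.mp hi)).le)
  rw [Fin.card_Ici, Fin.val_mk, hκ]; omega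

end Matrix

namespace LRSGD

open Matrix

section

variable {n : ℕ} {M : Matrix (Fin n) (Fin n) ℝ} {lam : Fin n → ℝ} {v : Fin n → Fin n → ℝ}

theorem IsEigenDecomp.mul_transpose_eq_one (h : IsEigenDecomp M lam v) :
    of v * (of v)ᵀ = 1 := by
  ext i j
  simpa [mul_apply, one_apply] using h.2.1 i j

theorem IsEigenDecomp.eq_transpose_mul_diagonal_mul (h : IsEigenDecomp M lam v) :
    M = (of v)ᵀ * diagonal lam * of v := by
  rw [h.2.2]
  ext a b
  rw [mul_apply]
  simp only [Matrix.sum_apply, Matrix.smul_apply, vecMulVec_apply, mul_diagonal,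
    transpose_apply, of_apply, smul_eq_mul]
  exact Finset.sum_congr rfl fun _ _ => by ring

end

theorem frobInner_mul_transpose_self {n r : ℕ} (V : Matrix (Fin n) (Fin r) ℝ)
    (D : Matrix (Fin n) (Fin n) ℝ) : frobInner (V * Vᵀ) D = trace (Vᵀ * D * V) := by
  rw [frobInner, ← trace_transpose, transpose_mul, transpose_transpose, trace_mul_comm,
    transpose_mul, transpose_transpose]
  exact (trace_mul_cycle Vᵀ D V).symm

/-- upper bound on λ_{r+1}(Y) for Y = X − η∇̃. -/
theorem stmt10 (n r : ℕ) (hrn : r < n)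
    (X : Matrix (Fin n) (Fin n) ℝ)
    (V : Matrix (Fin n) (Fin r) ℝ) (horth : Vᵀ * V = 1)
    (d : Fin r → ℝ) (hXdecomp : X = V * Matrix.diagonal d * Vᵀ)
    (D : Matrix (Fin n) (Fin n) ℝ)
    (lamD : Fin n → ℝ) (w : Fin n → Fin n → ℝ)
    (hlamD : IsEigenDecomp D lamD w)
    (η : ℝ) (hη : 0 < η)
    (lamY : Fin n → ℝ) (wY : Fin n → Fin n → ℝ)
    (hlamY : IsEigenDecomp (X - η • D) lamY wY) :
    lamY ⟨r, hrn⟩ ≤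
      η * (frobInner (V * Vᵀ) D -
        ∑ i : Fin (r + 1), lamD ⟨n - 1 - (i : ℕ), by have := i.2; omega⟩) := by
  obtain ⟨u, hu0, hu⟩ := exists_mulVec_eq_zero_dotProduct_self_eq_one
    (M := fromRows Vᵀ ((of wY).submatrix ((↑) : Set.Ioi (⟨r, hrn⟩ : Fin n) → Fin n) id))
    (by simp only [Fintype.card_sum, Fintype.card_fin, Fintype.card_Ioi, Fin.card_Ioi]; omega)
  rw [fromRows_mulVec] at hu0
  have hVu : Vᵀ *ᵥ u = 0 := funext fun j => congrFun hu0 (Sum.inl j)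
  have hYu : ∀ k, (of wY *ᵥ u) k ≠ 0 → lamY ⟨r, hrn⟩ ≤ lamY k := fun k hk =>
    hlamY.1 (not_lt.mp fun hrk => hk (congrFun hu0 (Sum.inr ⟨k, hrk⟩)))
  have hXu : X *ᵥ u = 0 := by rw [hXdecomp, ← mulVec_mulVec, hVu, mulVec_zero]
  have hlow : lamY ⟨r, hrn⟩ ≤ -(η * (u ⬝ᵥ D *ᵥ u)) := by
    have := mul_dotProduct_self_le_dotProduct_mulVec hlamY.mul_transpose_eq_one hYu
    rwa [hu, mul_one, ← hlamY.eq_transpose_mul_diagonal_mul, sub_mulVec, hXu, smul_mulVec,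
      dotProduct_sub, dotProduct_smul, dotProduct_zero, smul_eq_mul, zero_sub] at this
  have hKyFan := sum_fin_sub_le_trace_mul_mul_transpose (m := r + 1) (by omega) hrn hlamD.1
    hlamD.mul_transpose_eq_one
    (fromRows_replicateRow_mul_transpose_eq_one (by rwa [transpose_transpose]) hVu hu) (by simp)
  rw [← hlamD.eq_transpose_mul_diagonal_mul, trace_fromRows_mul_mul_transpose,
    trace_replicateRow_mul_mul_transpose, transpose_transpose, ← frobInner_mul_transpose_self]
    at hKyFan
  linarith [mul_le_mul_of_nonneg_left hKyFan hη.le]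

end LRSGD
end
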